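/- Let D be an acyclic bipartite tournament and m > \zeta(D) a positive integer. Then C^m(D) has no edges. -/

import Mathlib

/-- `walkN D n u v` : there is a directed walk of length `n` from `u` to `v` in the digraph `D`. -/
def walkN {V : Type*} (D : V → V → Prop) : ℕ → V → V → Prop
  | 0 => fun u v => u = v
  | n+1 => fun u v => ∃ w, D u w ∧ walkN D n w v

/-- The `m`-step competition graph of the digraph `D`. -/
def cmGraph {V : Type*} (D : V → V → Prop) (m : ℕ) : SimpleGraph V where
  Adj u v := u ≠ v ∧ ∃ z, walkN D m u z ∧ walkN D m v z
  symm := ⟨by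
    intro u v h
    exact ⟨Ne.symm h.1, h.2.imp fun z hz => ⟨hz.2, hz.1⟩⟩⟩
  loopless := ⟨by intro v h; exact h.1 rfl⟩

/-- Sinks of the subdigraph of `D` induced by `S`. -/
def sinks {V : Type*} (D : V → V → Prop) (S : Set V) : Set V :=
  {v ∈ S | ∀ w ∈ S, ¬ D v w}

/-- The digraph sequence `D_0, D_1, …` (as vertex sets) associated with the sink sequence. -/
def Dseq {V : Type*} (D : V → V → Prop) : ℕ → Set V
  | 0 => Set.univ
  | n+1 => Dseq D n \ sinks D (Dseq D n)

/-- The sink sequence `W_0, W_1, …` of `D`. -/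
def Wseq {V : Type*} (D : V → V → Prop) (n : ℕ) : Set V := sinks D (Dseq D n)

/-- `k` is the sink elimination index `ζ(D)`. -/
def IsSinkElimIndex {V : Type*} (D : V → V → Prop) (k : ℕ) : Prop :=
  (Wseq D k = Dseq D k ∨ Wseq D k = ∅) ∧
  ∀ j < k, Wseq D j ≠ Dseq D j ∧ Wseq D j ≠ ∅

/-- A digraph is acyclic iff it has no directed closed walk of positive length. -/
def DigraphAcyclic {V : Type*} (D : V → V → Prop) : Prop :=
  ∀ v : V, ∀ n : ℕ, 0 < n → ¬ walkN D n v v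

/-- `D` is a bipartite tournament with bipartition `(V1, V2)`. -/
structure IsBipartiteTournament {V : Type*} (D : V → V → Prop) (V1 V2 : Set V) : Prop where
  nonempty1 : V1.Nonempty
  nonempty2 : V2.Nonempty
  union_eq : V1 ∪ V2 = Set.univ
  disj : V1 ∩ V2 = ∅
  oriented : ∀ x ∈ V1, ∀ y ∈ V2, Xor' (D x y) (D y x)
  no_intra : ∀ x y, D x y → (x ∈ V1 ∧ y ∈ V2) ∨ (x ∈ V2 ∧ y ∈ V1)

/-- The competition graph sequence of `D` is eventually equal, starting from `q`. -/
def PeriodicFrom {V : Type*} (D : V → V → Prop) (q : ℕ) : Prop :=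
  ∃ r, 0 < r ∧ ∀ i : ℕ, cmGraph D (q + i) = cmGraph D (q + r + i)

/-- `q` is the competition index of `D`. -/
def IsCindex {V : Type*} (D : V → V → Prop) (q : ℕ) : Prop :=
  0 < q ∧ PeriodicFrom D q ∧ ∀ q', 0 < q' → PeriodicFrom D q' → q ≤ q'

/-- `p` is the competition period of `D`, given that `q` is its competition index. -/
def IsCperiod {V : Type*} (D : V → V → Prop) (q p : ℕ) : Prop :=
  0 < p ∧ cmGraph D q = cmGraph D (q + p) ∧
    ∀ p', 0 < p' → cmGraph D q = cmGraph D (q + p') → p ≤ p'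


/-!
A walk of length `n` starting at `u` forces `u ∈ D_n`: the second vertex of the walk starts a
walk of length `n - 1`, so it lies in `D_{n-1}` and `u` is not a sink there. A finite acyclic
digraph always has a sink, so `W_k = ∅` can only happen when `D_k = ∅`; either way
`D_{k+1} = ∅`, hence no walk of length `m > k` exists and `C^m(D)` has no edges.
-/

open Relation

section SinkElimination

variable {V : Type*} {D : V → V → Prop}

lemma exists_walkN_of_transGen {u v : V} (h : TransGen D u v) : ∃ n, 0 < n ∧ walkN D n u v := by
  induction h using TransGen.head_induction_on with
  | single huv => exact ⟨1, one_pos, v, huv, rfl⟩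
  | head huw _ ih =>
    obtain ⟨n, -, hn⟩ := ih
    exact ⟨n + 1, n.succ_pos, _, huw, hn⟩

lemma exists_walkN_of_walkN_succ {n : ℕ} {u z : V} (h : walkN D (n + 1) u z) :
    ∃ z', walkN D n u z' := by
  induction n generalizing u with
  | zero => exact ⟨u, rfl⟩
  | succ n ih =>
    obtain ⟨w, huw, hw⟩ := h
    obtain ⟨z', hz'⟩ := ih hw
    exact ⟨z', w, huw, hz'⟩

namespace DigraphAcyclic

lemma wellFounded_swap [Finite V] (hD : DigraphAcyclic D) : WellFounded (Function.swap D) := by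
  have : Std.Irrefl (TransGen (Function.swap D)) := ⟨fun v hv => by
    obtain ⟨n, hn, hwalk⟩ := exists_walkN_of_transGen (transGen_swap.mp hv)
    exact hD v n hn hwalk⟩
  exact Subrelation.wf TransGen.single (Finite.wellFounded_of_trans_of_irrefl _)

lemma sinks_nonempty [Finite V] (hD : DigraphAcyclic D) {S : Set V} (hS : S.Nonempty) :
    (sinks D S).Nonempty := by
  obtain ⟨v, hv, hmin⟩ := hD.wellFounded_swap.has_min S hS
  exact ⟨v, hv, hmin⟩

end DigraphAcyclic

lemma Dseq_antitone : Antitone (Dseq D) :=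
  antitone_nat_of_succ_le fun _ => Set.sdiff_subset

lemma mem_Dseq_of_walkN {n : ℕ} {u z : V} (h : walkN D n u z) : u ∈ Dseq D n := by
  induction n generalizing u z with
  | zero => trivial
  | succ n ih =>
    obtain ⟨w, huw, hw⟩ := h
    obtain ⟨z', hz'⟩ := exists_walkN_of_walkN_succ (D := D) ⟨w, huw, hw⟩
    exact ⟨ih hz', fun hsink => hsink.2 w (ih hw) huw⟩

lemma Dseq_succ_eq_empty [Finite V] (hD : DigraphAcyclic D) {k : ℕ}
    (hk : Wseq D k = Dseq D k ∨ Wseq D k = ∅) : Dseq D (k + 1) = ∅ := by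
  rcases hk with hall | hnone
  · exact (congrArg (Dseq D k \ ·) hall).trans Set.sdiff_self
  · have hDk : Dseq D k = ∅ :=
      Set.not_nonempty_iff_eq_empty.mp fun hne => (hD.sinks_nonempty hne).ne_empty hnone
    exact Set.subset_eq_empty (Dseq_antitone k.le_succ) hDk

end SinkElimination

theorem cmGraph_empty_of_gt_zeta_general {V : Type*} [Fintype V] (D : V → V → Prop)
    (hacyc : DigraphAcyclic D)
    (k : ℕ) (hk : IsSinkElimIndex D k)
    (m : ℕ) (hm : k < m) :
    cmGraph D m = ⊥ := by
  have hDm : Dseq D m = ∅ :=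
    Set.subset_eq_empty (Dseq_antitone hm) (Dseq_succ_eq_empty hacyc hk.1)
  ext u v
  simp only [cmGraph, SimpleGraph.bot_adj, iff_false]
  rintro ⟨-, z, huz, -⟩
  simpa [hDm] using mem_Dseq_of_walkN huz

/-- If `D` is an acyclic bipartite tournament and `m > ζ(D)`, then `C^m(D)`
has no edges. -/
theorem cmGraph_empty_of_gt_zeta {V : Type*} [Fintype V] (D : V → V → Prop)
    (V1 V2 : Set V) (hD : IsBipartiteTournament D V1 V2)
    (hacyc : DigraphAcyclic D)
    (k : ℕ) (hk : IsSinkElimIndex D k)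
    (m : ℕ) (hm : k < m) :
    cmGraph D m = ⊥ :=
  cmGraph_empty_of_gt_zeta_general D hacyc k hk m hm
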